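/- arXiv:2410.00908 — 2 statements merged into one kernel-verified Lean document; each statement's English description precedes it below -/
import Mathlib

section
/- For all D ≥ 1 and n_max ≥ 1 there exists N₀ such that for every N ≥ N₀ the following holds: if for each 1 ≤ n ≤ n_max a coefficient function λ_n : (Perm(Fin n))^D → ℂ is given which satisfies λ_n(η σ_1 ν, …, η σ_D ν) = λ_n(σ_1,…,σ_D) for all η, ν ∈ Perm(Fin n), and if Σ_{n=1}^{n_max} Σ_{σ ∈ (Perm(Fin n))^D} λ_n(σ) · Tr_σ(T,S) = 0 for every pair of pure tensors T, S of size N with D indices, then λ_n(σ) = 0 for all n ≤ n_max and all σ. (Linear independence of the pure trace-invariants, one per left-right equivalence class, for N large enough.) -/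
/-- The trace-invariant of a pair of pure tensors `T`, `S` of size `N` with `D`
indices, associated to a `D`-tuple `σ` of permutations of `Fin n`. -/
noncomputable def trInvPure {N D n : ℕ} (σ : Fin D → Equiv.Perm (Fin n))
    (T S : (Fin D → Fin N) → ℂ) : ℂ :=
  ∑ i : Fin n → Fin D → Fin N,
    (∏ s : Fin n, T fun c => i s c) * ∏ s : Fin n, S fun c => i ((σ c)⁻¹ s) c

/-!
Since `Tr_σ(t • T, S) = tⁿ Tr_σ(T, S)`, a vanishing combination vanishes degree by degree, so it
suffices to treat a single `n ≤ N`. Fix `σ₀` and embed `Fin n` into `Fin N`; take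
`T = ∑_{a ∈ A} e_{(σ₀_c a)_c}` and `S = ∑_{b ∈ B} e_{(b, …, b)}`. Then `Tr_σ(T, S)` counts the
pairs of labellings `g : Fin n → A`, `h : Fin n → B` compatible with `σ`. The alternating sum over
`A` and `B` keeps only the surjective, i.e. bijective, labellings `π, κ`, and these are compatible
with `σ` exactly when `σ = κ⁻¹ σ₀ π`. By left-right invariance the combination becomes
`(n!)² λ(σ₀)`, which must therefore vanish.
-/

open Finset Function Equiv

theorem Polynomial.eq_zero_of_forall_sum_mul_pow_eq_zero {R : Type*} [CommRing R] [IsDomain R]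
    [Infinite R] {s : Finset ℕ} {c : ℕ → R} (h : ∀ t : R, ∑ n ∈ s, c n * t ^ n = 0) {n : ℕ}
    (hn : n ∈ s) : c n = 0 := by
  have hp : ∑ m ∈ s, C (c m) * X ^ m = 0 := funext fun t => by simpa [eval_finsetSum] using h t
  simpa [finsetSum_coeff, coeff_C_mul, coeff_X_pow, hn] using congrArg (coeff · n) hp

theorem Finset.sum_superset_neg_one_pow_card_compl {β R : Type*} [Fintype β] [DecidableEq β]
    [CommRing R] (s : Finset β) :
    ∑ A with s ⊆ A, (-1 : R) ^ #Aᶜ = if s = univ then 1 else 0 := by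
  have hcompl : ∑ A with s ⊆ A, (-1 : R) ^ #Aᶜ = ∑ C ∈ sᶜ.powerset, (-1 : R) ^ #C :=
    sum_nbij' compl compl (by simp) (by simp [subset_compl_comm]) (by simp) (by simp) (by simp)
  have h := congrArg (Int.cast : ℤ → R) (sum_powerset_neg_one_pow_card (x := sᶜ))
  push_cast at h
  simpa [hcompl] using h

theorem Finset.sum_neg_one_pow_card_compl_mul_sum_piFinset {ι β R : Type*} [Fintype ι]
    [DecidableEq ι] [Fintype β] [DecidableEq β] [CommRing R] (F : (ι → β) → R) :
    ∑ A : Finset β, (-1 : R) ^ #Aᶜ * ∑ g ∈ Fintype.piFinset fun _ => A, F g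
      = ∑ g with Surjective g, F g := by
  have hmem (g : ι → β) (A : Finset β) :
      g ∈ Fintype.piFinset (fun _ => A) ↔ univ.image g ⊆ A := by
    simp [subset_iff]
  have hsurj (g : ι → β) : univ.image g = univ ↔ Surjective g := by
    simp [eq_univ_iff_forall, Surjective]
  calc _ = ∑ A : Finset β, ∑ g, if univ.image g ⊆ A then (-1 : R) ^ #Aᶜ * F g else 0 := by
        refine sum_congr rfl fun A _ => ?_
        rw [mul_sum, ← univ_inter (Fintype.piFinset _), ← sum_ite_mem]
        simp only [hmem]
    _ = ∑ g, (∑ A with univ.image g ⊆ A, (-1 : R) ^ #Aᶜ) * F g := by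
        rw [sum_comm]
        simp only [sum_filter, sum_mul, ite_mul, zero_mul]
    _ = _ := by
        simp only [sum_superset_neg_one_pow_card_compl, hsurj, boole_mul, ← sum_filter]

theorem Finset.sum_filter_surjective_eq_sum_perm {α M : Type*} [Fintype α] [DecidableEq α]
    [AddCommMonoid M] (F : (α → α) → M) :
    ∑ g with Surjective g, F g = ∑ π : Perm α, F π :=
  (sum_bij (fun (π : Perm α) _ => (π : α → α)) (fun π _ => by simp [π.surjective])
    (fun _ _ _ _ h => DFunLike.coe_injective h)
    (fun g hg => have hg : Surjective g := (mem_filter.mp hg).2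
      ⟨ofBijective g ⟨Finite.injective_iff_surjective.mpr hg, hg⟩, mem_univ _, rfl⟩)
    fun _ _ => rfl).symm

section PureTensors

variable {N D n : ℕ}

theorem trInvPure_smul_left (σ : Fin D → Perm (Fin n)) (t : ℂ) (T S : (Fin D → Fin N) → ℂ) :
    trInvPure σ (t • T) S = t ^ n * trInvPure σ T S := by
  simp only [trInvPure, Pi.smul_apply, smul_eq_mul, prod_mul_distrib, prod_const, card_univ,
    Fintype.card_fin, mul_sum, mul_assoc]

noncomputable def deltaSum {α : Type*} (p : α → Fin D → Fin N) (A : Finset α) :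
    (Fin D → Fin N) → ℂ :=
  fun j => ∑ a ∈ A, if p a = j then 1 else 0

theorem trInvPure_deltaSum {α : Type*} (σ : Fin D → Perm (Fin n)) (p q : α → Fin D → Fin N)
    (A B : Finset α) :
    trInvPure σ (deltaSum p A) (deltaSum q B) =
      ∑ g ∈ Fintype.piFinset (fun _ => A), ∑ h ∈ Fintype.piFinset (fun _ => B),
        if ∀ s, q (h s) = fun c => p (g ((σ c)⁻¹ s)) c then 1 else 0 := by
  simp only [trInvPure, deltaSum, prod_univ_sum, Fintype.prod_boole, sum_mul_sum]
  rw [sum_comm]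
  refine sum_congr rfl fun g _ => ?_
  rw [sum_comm]
  refine sum_congr rfl fun h _ => ?_
  rw [Fintype.sum_eq_single (fun s => p (g s)) fun i hi => ?_]
  · simp
  · have : ¬ ∀ s, p (g s) = i s := fun h' => hi (funext fun s => (h' s).symm)
    simp [this]

noncomputable def trInvPureComb (lam : (Fin D → Perm (Fin n)) → ℂ) (T S : (Fin D → Fin N) → ℂ) :
    ℂ :=
  ∑ σ, lam σ * trInvPure σ T S

theorem trInvPureComb_smul_left (lam : (Fin D → Perm (Fin n)) → ℂ) (t : ℂ)
    (T S : (Fin D → Fin N) → ℂ) :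
    trInvPureComb lam (t • T) S = t ^ n * trInvPureComb lam T S := by
  simp only [trInvPureComb, trInvPure_smul_left, mul_sum, mul_left_comm]

theorem trInvPureComb_eq_zero_of_forall_sum_eq_zero {s : Finset ℕ}
    {lam : (n : ℕ) → (Fin D → Perm (Fin n)) → ℂ}
    (h : ∀ T S : (Fin D → Fin N) → ℂ, ∑ n ∈ s, trInvPureComb (lam n) T S = 0) (hn : n ∈ s)
    (T S : (Fin D → Fin N) → ℂ) : trInvPureComb (lam n) T S = 0 :=
  Polynomial.eq_zero_of_forall_sum_mul_pow_eq_zero (c := fun m => trInvPureComb (lam m) T S)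
    (fun t => by simpa [trInvPureComb_smul_left, mul_comm] using h (t • T) S) hn

theorem sum_neg_one_pow_mul_trInvPure_deltaSum (σ : Fin D → Perm (Fin n))
    (p q : Fin n → Fin D → Fin N) :
    ∑ A : Finset (Fin n), (-1 : ℂ) ^ #Aᶜ * ∑ B : Finset (Fin n), (-1 : ℂ) ^ #Bᶜ *
        trInvPure σ (deltaSum p A) (deltaSum q B)
      = ∑ π : Perm (Fin n), ∑ κ : Perm (Fin n),
          if ∀ s, q (κ s) = fun c => p (π ((σ c)⁻¹ s)) c then 1 else 0 := by
  simp only [trInvPure_deltaSum]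
  calc _ = ∑ A : Finset (Fin n), (-1 : ℂ) ^ #Aᶜ * ∑ g ∈ Fintype.piFinset fun _ => A,
        ∑ B : Finset (Fin n), (-1 : ℂ) ^ #Bᶜ * ∑ h ∈ Fintype.piFinset fun _ => B,
          if ∀ s, q (h s) = fun c => p (g ((σ c)⁻¹ s)) c then (1 : ℂ) else 0 := by
        refine sum_congr rfl fun A _ => congrArg _ ?_
        simp only [mul_sum]
        exact sum_comm
    _ = _ := by
        simp only [sum_neg_one_pow_card_compl_mul_sum_piFinset, sum_filter_surjective_eq_sum_perm]

theorem forall_diagonal_eq_twisted_iff (hn : n ≤ N) (σ₀ σ : Fin D → Perm (Fin n))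
    (π κ : Perm (Fin n)) :
    (∀ s, (fun _ => Fin.castLE hn (κ s)) = fun c => Fin.castLE hn (σ₀ c (π ((σ c)⁻¹ s))))
      ↔ σ = fun c => κ⁻¹ * σ₀ c * π := by
  simp only [funext_iff, Fin.castLE_inj]
  rw [forall_comm]
  refine forall_congr' fun c => ?_
  calc (∀ s, κ s = σ₀ c (π ((σ c)⁻¹ s))) ↔ κ = σ₀ c * π * (σ c)⁻¹ := by
        rw [Perm.ext_iff]; exact Iff.rfl
    _ ↔ σ c = κ⁻¹ * σ₀ c * π := by
        rw [eq_mul_inv_iff_mul_eq, mul_assoc κ⁻¹, eq_inv_mul_iff_mul_eq]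

theorem eq_zero_of_forall_trInvPureComb_eq_zero (hn : n ≤ N) {lam : (Fin D → Perm (Fin n)) → ℂ}
    (hlam : ∀ (σ : Fin D → Perm (Fin n)) (η ν : Perm (Fin n)), lam (fun c => η * σ c * ν) = lam σ)
    (h : ∀ T S : (Fin D → Fin N) → ℂ, trInvPureComb lam T S = 0) (σ₀ : Fin D → Perm (Fin n)) :
    lam σ₀ = 0 := by
  set p : Fin n → Fin D → Fin N := fun a c => Fin.castLE hn (σ₀ c a)
  set q : Fin n → Fin D → Fin N := fun b _ => Fin.castLE hn b
  have hsigned (σ : Fin D → Perm (Fin n)) :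
      ∑ A : Finset (Fin n), (-1 : ℂ) ^ #Aᶜ * ∑ B : Finset (Fin n), (-1 : ℂ) ^ #Bᶜ *
          trInvPure σ (deltaSum p A) (deltaSum q B)
        = ∑ π : Perm (Fin n), ∑ κ : Perm (Fin n),
            if σ = (fun c => κ⁻¹ * σ₀ c * π) then 1 else 0 := by
    simp only [sum_neg_one_pow_mul_trInvPure_deltaSum, p, q, forall_diagonal_eq_twisted_iff]
  have hcount : (n.factorial : ℂ) ^ 2 * lam σ₀ = 0 := calc
    (n.factorial : ℂ) ^ 2 * lam σ₀
        = ∑ π : Perm (Fin n), ∑ κ : Perm (Fin n), lam (fun c => κ⁻¹ * σ₀ c * π) := by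
      simp only [hlam, sum_const, card_univ, Fintype.card_perm, Fintype.card_fin, nsmul_eq_mul]
      ring
    _ = ∑ σ, lam σ * ∑ π : Perm (Fin n), ∑ κ : Perm (Fin n),
          if σ = (fun c => κ⁻¹ * σ₀ c * π) then 1 else 0 := by
      simp only [mul_sum, mul_boole]
      rw [eq_comm, sum_comm]
      refine sum_congr rfl fun π _ => ?_
      rw [sum_comm]
      simp only [sum_ite_eq', mem_univ, if_true]
    _ = ∑ A : Finset (Fin n), (-1 : ℂ) ^ #Aᶜ * ∑ B : Finset (Fin n), (-1 : ℂ) ^ #Bᶜ *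
          trInvPureComb lam (deltaSum p A) (deltaSum q B) := by
      simp only [← hsigned, trInvPureComb, mul_sum]
      rw [sum_comm]
      refine sum_congr rfl fun A _ => ?_
      rw [sum_comm]
      refine sum_congr rfl fun B _ => sum_congr rfl fun σ _ => ?_
      ring
    _ = 0 := by simp [h]
  simpa [Nat.factorial_ne_zero] using hcount

end PureTensors

theorem pure_trace_invariants_linearly_independent_general
    (D nmax : ℕ) :
    ∃ N₀ : ℕ, ∀ N : ℕ, N₀ ≤ N →
      ∀ lam : (n : ℕ) → (Fin D → Equiv.Perm (Fin n)) → ℂ,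
        (∀ n, 1 ≤ n → n ≤ nmax →
          ∀ (σ : Fin D → Equiv.Perm (Fin n)) (η ν : Equiv.Perm (Fin n)),
            lam n (fun c => η * σ c * ν) = lam n σ) →
        (∀ T S : (Fin D → Fin N) → ℂ,
          ∑ n ∈ Finset.Icc 1 nmax,
            ∑ σ : Fin D → Equiv.Perm (Fin n), lam n σ * trInvPure σ T S = 0) →
        ∀ n, 1 ≤ n → n ≤ nmax →
          ∀ σ : Fin D → Equiv.Perm (Fin n), lam n σ = 0 := by
  refine ⟨nmax, fun N hN lam hlam h n hn₁ hn₂ => ?_⟩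
  exact eq_zero_of_forall_trInvPureComb_eq_zero (hn₂.trans hN) (hlam n hn₁ hn₂)
    (trInvPureComb_eq_zero_of_forall_sum_eq_zero h (mem_Icc.mpr ⟨hn₁, hn₂⟩))

/-- Linear independence of the pure trace-invariants (one per left-right
equivalence class) for `N` large enough. -/
theorem pure_trace_invariants_linearly_independent
    (D nmax : ℕ) (hD : 1 ≤ D) (hmax : 1 ≤ nmax) :
    ∃ N₀ : ℕ, ∀ N : ℕ, N₀ ≤ N →
      ∀ lam : (n : ℕ) → (Fin D → Equiv.Perm (Fin n)) → ℂ,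
        (∀ n, 1 ≤ n → n ≤ nmax →
          ∀ (σ : Fin D → Equiv.Perm (Fin n)) (η ν : Equiv.Perm (Fin n)),
            lam n (fun c => η * σ c * ν) = lam n σ) →
        (∀ T S : (Fin D → Fin N) → ℂ,
          ∑ n ∈ Finset.Icc 1 nmax,
            ∑ σ : Fin D → Equiv.Perm (Fin n), lam n σ * trInvPure σ T S = 0) →
        ∀ n, 1 ≤ n → n ≤ nmax →
          ∀ σ : Fin D → Equiv.Perm (Fin n), lam n σ = 0 :=
  pure_trace_invariants_linearly_independent_general D nmax
end

section
/- Let n ≥ 1, D ≥ 1, let σ, τ be D-tuples of permutations of Fin n and let η be a permutation of Fin n, with K_p(σ) = 1 and K_p(τ⌢η) = K_p(τ). Then, as integers, (K_p(σ⌢τ) − K_p(τ) + d(σ,τ)) + ω̄(τ;η) − ω̄(σ;η) = d(σ,τ) + d(τ,η) − d(σ,η). In particular (K_p(σ⌢τ) − K_p(τ) + d(σ,τ)) + ω̄(τ;η) ≥ ω̄(σ;η), with equality if and only if τ_c η⁻¹ ⪯ σ_c η⁻¹ for every c ∈ {1,…,D}. -/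
/-- `#π`: the number of orbits of a permutation of `Fin n`
(its cycles, counting fixed points). -/
def permOrbits {n : ℕ} (π : Equiv.Perm (Fin n)) : ℕ :=
  Multiset.card π.cycleType + (Finset.univ.filter fun x => π x = x).card

/-- `|π| = n - #π`, the minimal number of transpositions whose product is `π`. -/
def permLen {n : ℕ} (π : Equiv.Perm (Fin n)) : ℕ := n - permOrbits π

/-- The bipartite graph on `Fin n ⊕ Fin n` with an edge between `inl s` and
`inr t` exactly when `t = σ_c s` for some component `σ_c` of the tuple. -/
def pairGraph {n D : ℕ} (σ : Fin D → Equiv.Perm (Fin n)) :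
    SimpleGraph ((Fin n) ⊕ (Fin n)) :=
  SimpleGraph.fromRel fun a b =>
    ∃ s t : Fin n, a = Sum.inl s ∧ b = Sum.inr t ∧ ∃ c, σ c s = t

/-- `K_p(σ)`: the number of pure connected components of `σ`. -/
noncomputable def Kp {n D : ℕ} (σ : Fin D → Equiv.Perm (Fin n)) : ℕ :=
  Nat.card (pairGraph σ).ConnectedComponent

/-- `d(σ,η) = Σ_c |σ_c η⁻¹|`. -/
def dEta {n D : ℕ} (σ : Fin D → Equiv.Perm (Fin n)) (η : Equiv.Perm (Fin n)) : ℕ :=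
  ∑ c, permLen (σ c * η⁻¹)

/-- `d(σ,τ) = Σ_c |σ_c τ_c⁻¹|`. -/
def dTuple {n D : ℕ} (σ τ : Fin D → Equiv.Perm (Fin n)) : ℕ :=
  ∑ c, permLen (σ c * (τ c)⁻¹)

/-- The degree `ω(σ) = Σ_{c₁<c₂} |σ_{c₁} σ_{c₂}⁻¹| − (D−1)(n − K_p(σ))`,
an integer. -/
noncomputable def degInv {n D : ℕ} (σ : Fin D → Equiv.Perm (Fin n)) : ℤ :=
  (∑ p ∈ Finset.univ.filter (fun p : Fin D × Fin D => p.1 < p.2),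
      (permLen (σ p.1 * (σ p.2)⁻¹) : ℤ)) -
    ((D : ℤ) - 1) * ((n : ℤ) - (Kp σ : ℤ))

/-- `ω̄(σ;η) = D·K_p(σ⌢η) − (D−1)·K_p(σ) − n + d(σ,η)`, an integer. -/
noncomputable def omegaBar {n D : ℕ} (σ : Fin D → Equiv.Perm (Fin n))
    (η : Equiv.Perm (Fin n)) : ℤ :=
  (D : ℤ) * (Kp (Fin.snoc σ η : Fin (D + 1) → Equiv.Perm (Fin n)) : ℤ) -
    ((D : ℤ) - 1) * (Kp σ : ℤ) - (n : ℤ) + (dEta σ η : ℤ)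

/-- `α ⪯ β`: the permutation `α` lies on a geodesic from the identity to `β`,
i.e. `|α| + |α β⁻¹| = |β|`. -/
def geodesicLe {n : ℕ} (α β : Equiv.Perm (Fin n)) : Prop :=
  permLen α + permLen (α * β⁻¹) = permLen β

/-! Because `K_p(σ) = 1` and appending permutations to a tuple only adds edges to its graph,
`K_p(σ⌢τ) = K_p(σ⌢η) = 1`; with `K_p(τ⌢η) = K_p(τ)` the identity becomes linear arithmetic in
the distances. The inequality and its equality case are the triangle inequality
`|σ_c η⁻¹| ≤ |σ_c τ_c⁻¹| + |τ_c η⁻¹|` summed over `c`. It holds because `|π|` is the rank of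
`P_π - 1`, where `P_π v = v ∘ π` on `Fin n → ℚ`: the kernel consists of the functions constant on
the orbits of `π`, and `P_{ab} - 1 = P_b (P_a - 1) + (P_b - 1)`. -/

open scoped Finset

namespace Equiv.Perm

theorem card_quot_sameCycle {α : Type*} [Fintype α] [DecidableEq α] (π : Perm α) :
    Nat.card (Quot π.SameCycle) = #π.cycleFactorsFinset + #{x | π x = x} := by
  let f : α → π.cycleFactorsFinset ⊕ {x // π x = x} := fun x =>
    if hx : π x = x then .inr ⟨x, hx⟩
    else .inl ⟨π.cycleOf x, cycleOf_mem_cycleFactorsFinset_iff.2 (mem_support.2 hx)⟩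
  have hf : ∀ x y, π.SameCycle x y → f x = f y := by
    intro x y hxy
    by_cases hx : π x = x
    · rw [hxy.eq_of_left hx]
    · have hy : π y ≠ y := fun hy => hx (hxy.apply_eq_self_iff.2 hy)
      simp only [f, dif_neg hx, dif_neg hy, hxy.cycleOf_eq]
  have hbij : Function.Bijective (Quot.lift f hf) := by
    constructor
    · refine fun a b => Quot.induction_on₂ a b fun x y hxy => Quot.sound ?_
      by_cases hx : π x = x <;> by_cases hy : π y = y <;>
        simp only [f, hx, hy, ↓reduceDIte, reduceCtorEq, Sum.inl.injEq, Sum.inr.injEq,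
          Subtype.mk.injEq] at hxy
      · exact hxy ▸ SameCycle.rfl
      · exact (sameCycle_iff_cycleOf_eq_of_mem_support (mem_support.2 hx)
          (mem_support.2 hy)).2 hxy
    · rintro (⟨c, hc⟩ | ⟨x, hx⟩)
      · obtain ⟨x, hx⟩ := (mem_cycleFactorsFinset_iff.1 hc).1.nonempty_support
        have hπx : π x ≠ x := (mem_cycleFactorsFinset_iff.1 hc).2 x hx ▸ mem_support.1 hx
        exact ⟨Quot.mk _ x, by simp [f, hπx, (cycle_is_cycleOf hx hc).symm]⟩
      · exact ⟨Quot.mk _ x, by simp [f, hx]⟩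
  rw [Nat.card_eq_of_bijective _ hbij, Nat.card_sum, Nat.card_eq_fintype_card,
    Nat.card_eq_fintype_card, Fintype.card_coe, Fintype.card_subtype]

section FunLeftSubId

open Module LinearMap

variable (K : Type*) [Field K] {α : Type*}

noncomputable def funLeftSubId (π : Perm α) : (α → K) →ₗ[K] (α → K) :=
  funLeft K K π - LinearMap.id

variable {K}

theorem mem_ker_funLeftSubId {π : Perm α} {v : α → K} :
    v ∈ ker (funLeftSubId K π) ↔ v ∘ π = v := by
  rw [mem_ker, funLeftSubId, LinearMap.sub_apply, sub_eq_zero]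
  rfl

theorem ker_funLeftSubId [Finite α] (π : Perm α) :
    ker (funLeftSubId K π) = range (funLeft K K (Quot.mk π.SameCycle)) := by
  ext v
  rw [mem_ker_funLeftSubId]
  constructor
  · intro hv
    refine ⟨Quot.lift v fun x y hxy => ?_, rfl⟩
    obtain ⟨k, -, rfl⟩ := hxy.exists_nat_pow_eq
    rw [coe_pow]
    exact (congrFun (Function.iterate_invariant hv k) x).symm
  · rintro ⟨w, rfl⟩
    exact funext fun x => congrArg w (Quot.sound (sameCycle_apply_left.2 .rfl))

theorem finrank_ker_funLeftSubId [Finite α] (π : Perm α) :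
    finrank K (ker (funLeftSubId K π)) = Nat.card (Quot π.SameCycle) := by
  have : Fintype (Quot π.SameCycle) := Fintype.ofFinite _
  rw [ker_funLeftSubId, finrank_range_of_inj
    (funLeft_injective_of_surjective _ _ _ Quot.mk_surjective),
    finrank_fintype_fun_eq_card, Nat.card_eq_fintype_card]

theorem funLeftSubId_mul (a b : Perm α) :
    funLeftSubId K (a * b) = funLeft K K b ∘ₗ funLeftSubId K a + funLeftSubId K b := by
  ext v x
  simp [funLeftSubId, funLeft_apply]

theorem finrank_range_funLeftSubId_mul_le [Finite α] (a b : Perm α) :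
    finrank K (range (funLeftSubId K (a * b))) ≤
      finrank K (range (funLeftSubId K a)) + finrank K (range (funLeftSubId K b)) := by
  rw [funLeftSubId_mul]
  calc finrank K (range (funLeft K K b ∘ₗ funLeftSubId K a + funLeftSubId K b))
      ≤ finrank K ↥(range (funLeft K K b ∘ₗ funLeftSubId K a) ⊔ range (funLeftSubId K b)) :=
        Submodule.finrank_mono (range_add_le _ _)
    _ ≤ finrank K (range (funLeft K K b ∘ₗ funLeftSubId K a)) +
          finrank K (range (funLeftSubId K b)) :=
        Submodule.finrank_add_le_finrank_add_finrank _ _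
    _ ≤ _ := by
        rw [range_comp]
        gcongr
        exact Submodule.finrank_map_le _ _

end FunLeftSubId

end Equiv.Perm

section PermLen

open Equiv Equiv.Perm Module LinearMap

variable {n : ℕ}

theorem permOrbits_eq_card_quot (π : Perm (Fin n)) :
    permOrbits π = Nat.card (Quot π.SameCycle) := by
  rw [card_quot_sameCycle, permOrbits, cycleType_def, Multiset.card_map]
  rfl

theorem permLen_eq_finrank_range (π : Perm (Fin n)) :
    permLen π = finrank ℚ (range (funLeftSubId ℚ π)) := by
  have := finrank_range_add_finrank_ker (funLeftSubId ℚ π)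
  rw [finrank_ker_funLeftSubId, ← permOrbits_eq_card_quot, finrank_fin_fun] at this
  rw [permLen]
  omega

theorem permLen_mul_le (a b : Perm (Fin n)) : permLen (a * b) ≤ permLen a + permLen b := by
  simpa only [permLen_eq_finrank_range] using finrank_range_funLeftSubId_mul_le a b

theorem permLen_inv (π : Perm (Fin n)) : permLen π⁻¹ = permLen π := by
  have : π⁻¹.SameCycle = π.SameCycle := by
    ext
    exact sameCycle_inv
  rw [permLen, permLen, permOrbits_eq_card_quot, permOrbits_eq_card_quot, this]

theorem permLen_mul_inv_le (a b c : Perm (Fin n)) :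
    permLen (a * c⁻¹) ≤ permLen (a * b⁻¹) + permLen (b * c⁻¹) := by
  simpa only [mul_assoc, inv_mul_cancel_left] using permLen_mul_le (a * b⁻¹) (b * c⁻¹)

theorem geodesicLe_mul_inv_iff (a b c : Perm (Fin n)) :
    geodesicLe (b * c⁻¹) (a * c⁻¹) ↔
      permLen (a * b⁻¹) + permLen (b * c⁻¹) = permLen (a * c⁻¹) := by
  rw [geodesicLe, show b * c⁻¹ * (a * c⁻¹)⁻¹ = (a * b⁻¹)⁻¹ by group, permLen_inv, add_comm]

end PermLen

theorem SimpleGraph.card_connectedComponent_eq_one_of_le {V : Type*} [Finite V]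
    {G G' : SimpleGraph V} (hle : G ≤ G') (h : Nat.card G.ConnectedComponent = 1) :
    Nat.card G'.ConnectedComponent = 1 := by
  obtain ⟨-, ⟨C⟩⟩ := Nat.card_eq_one_iff_unique.1 h
  obtain ⟨v, -⟩ := C.nonempty_supp
  have : Nonempty G'.ConnectedComponent := ⟨G'.connectedComponentMk v⟩
  exact le_antisymm (h ▸ SimpleGraph.ConnectedComponent.card_le_card_of_le hle) Nat.card_pos

section Tuples

open Equiv

variable {n D : ℕ}

theorem dEta_le_dTuple_add_dEta (σ τ : Fin D → Perm (Fin n)) (η : Perm (Fin n)) :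
    dEta σ η ≤ dTuple σ τ + dEta τ η := by
  rw [dEta, dTuple, dEta, ← Finset.sum_add_distrib]
  exact Finset.sum_le_sum fun c _ => permLen_mul_inv_le _ _ _

theorem dTuple_add_dEta_eq_iff (σ τ : Fin D → Perm (Fin n)) (η : Perm (Fin n)) :
    dTuple σ τ + dEta τ η = dEta σ η ↔ ∀ c, geodesicLe (τ c * η⁻¹) (σ c * η⁻¹) := by
  simp only [geodesicLe_mul_inv_iff]
  rw [dEta, dTuple, dEta, ← Finset.sum_add_distrib, eq_comm,
    Finset.sum_eq_sum_iff_of_le fun c _ => permLen_mul_inv_le _ _ _]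
  simp only [Finset.mem_univ, true_implies, eq_comm]

theorem pairGraph_mono {D' : ℕ} {σ : Fin D → Perm (Fin n)} {σ' : Fin D' → Perm (Fin n)}
    (h : Set.range σ ⊆ Set.range σ') : pairGraph σ ≤ pairGraph σ' := by
  have hrel : ∀ a b : Fin n ⊕ Fin n, (∃ s t, a = .inl s ∧ b = .inr t ∧ ∃ c, σ c s = t) →
      ∃ s t, a = .inl s ∧ b = .inr t ∧ ∃ c, σ' c s = t := by
    rintro a b ⟨s, t, ha, hb, c, hc⟩
    obtain ⟨c', hc'⟩ := h ⟨c, rfl⟩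
    exact ⟨s, t, ha, hb, c', hc' ▸ hc⟩
  intro a b hab
  rw [pairGraph, SimpleGraph.fromRel_adj] at hab ⊢
  exact ⟨hab.1, hab.2.imp (hrel a b) (hrel b a)⟩

theorem Kp_eq_one_of_range_subset {D' : ℕ} {σ : Fin D → Perm (Fin n)}
    {σ' : Fin D' → Perm (Fin n)} (h : Set.range σ ⊆ Set.range σ') (hσ : Kp σ = 1) :
    Kp σ' = 1 :=
  SimpleGraph.card_connectedComponent_eq_one_of_le (pairGraph_mono h) hσ

theorem omegaBar_eq_of_Kp_snoc (τ : Fin D → Perm (Fin n)) (η : Perm (Fin n))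
    (h : Kp (Fin.snoc τ η : Fin (D + 1) → Perm (Fin n)) = Kp τ) :
    omegaBar τ η = Kp τ - n + dEta τ η := by
  rw [omegaBar, h]
  ring

end Tuples

theorem triangular_identity_in_degrees_general
    (n D : ℕ)
    (σ τ : Fin D → Equiv.Perm (Fin n)) (η : Equiv.Perm (Fin n))
    (hK : Kp σ = 1)
    (hτ : Kp (Fin.snoc τ η : Fin (D + 1) → Equiv.Perm (Fin n)) = Kp τ) :
    (((Kp (Fin.append σ τ : Fin (D + D) → Equiv.Perm (Fin n)) : ℤ) -
          (Kp τ : ℤ) + (dTuple σ τ : ℤ)) + omegaBar τ η - omegaBar σ η =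
        (dTuple σ τ : ℤ) + (dEta τ η : ℤ) - (dEta σ η : ℤ)) ∧
      (omegaBar σ η ≤
        ((Kp (Fin.append σ τ : Fin (D + D) → Equiv.Perm (Fin n)) : ℤ) -
          (Kp τ : ℤ) + (dTuple σ τ : ℤ)) + omegaBar τ η) ∧
      ((((Kp (Fin.append σ τ : Fin (D + D) → Equiv.Perm (Fin n)) : ℤ) -
            (Kp τ : ℤ) + (dTuple σ τ : ℤ)) + omegaBar τ η = omegaBar σ η) ↔
        ∀ c, geodesicLe (τ c * η⁻¹) (σ c * η⁻¹)) := by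
  have happend : Kp (Fin.append σ τ : Fin (D + D) → Equiv.Perm (Fin n)) = 1 :=
    Kp_eq_one_of_range_subset
      (Set.range_subset_iff.2 fun c => ⟨Fin.castAdd D c, Fin.append_left σ τ c⟩) hK
  have hσ : Kp (Fin.snoc σ η : Fin (D + 1) → Equiv.Perm (Fin n)) = Kp σ := by
    rw [hK]
    exact Kp_eq_one_of_range_subset (by simp [Set.subset_insert]) hK
  have htri := dEta_le_dTuple_add_dEta σ τ η
  have heq := dTuple_add_dEta_eq_iff σ τ η
  rw [happend, omegaBar_eq_of_Kp_snoc σ η hσ, omegaBar_eq_of_Kp_snoc τ η hτ, hK]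
  refine ⟨by ring, by push_cast; omega, ?_⟩
  rw [← heq]
  push_cast
  omega

/-- For `K_p(σ) = 1` and `K_p(τ⌢η) = K_p(τ)`:
`(K_p(σ⌢τ) − K_p(τ) + d(σ,τ)) + ω̄(τ;η) − ω̄(σ;η) = d(σ,τ) + d(τ,η) − d(σ,η)`;
in particular `(K_p(σ⌢τ) − K_p(τ) + d(σ,τ)) + ω̄(τ;η) ≥ ω̄(σ;η)`, with
equality iff `τ_c η⁻¹ ⪯ σ_c η⁻¹` for every `c`. -/
theorem triangular_identity_in_degrees
    (n D : ℕ) (hn : 1 ≤ n) (hD : 1 ≤ D)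
    (σ τ : Fin D → Equiv.Perm (Fin n)) (η : Equiv.Perm (Fin n))
    (hK : Kp σ = 1)
    (hτ : Kp (Fin.snoc τ η : Fin (D + 1) → Equiv.Perm (Fin n)) = Kp τ) :
    (((Kp (Fin.append σ τ : Fin (D + D) → Equiv.Perm (Fin n)) : ℤ) -
          (Kp τ : ℤ) + (dTuple σ τ : ℤ)) + omegaBar τ η - omegaBar σ η =
        (dTuple σ τ : ℤ) + (dEta τ η : ℤ) - (dEta σ η : ℤ)) ∧
      (omegaBar σ η ≤
        ((Kp (Fin.append σ τ : Fin (D + D) → Equiv.Perm (Fin n)) : ℤ) -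
          (Kp τ : ℤ) + (dTuple σ τ : ℤ)) + omegaBar τ η) ∧
      ((((Kp (Fin.append σ τ : Fin (D + D) → Equiv.Perm (Fin n)) : ℤ) -
            (Kp τ : ℤ) + (dTuple σ τ : ℤ)) + omegaBar τ η = omegaBar σ η) ↔
        ∀ c, geodesicLe (τ c * η⁻¹) (σ c * η⁻¹)) :=
  triangular_identity_in_degrees_general n D σ τ η hK hτ
end
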